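/- (Gill–Lorentzen) If X is a relatively compact subdomain of Δ and f_n : Δ → X are holomorphic, then the compositions F_n = f₁ ∘ f₂ ∘ ⋯ ∘ f_n converge locally uniformly on Δ to a single constant c ∈ closure(X) ⊂ Δ. -/

import Mathlib

open Complex Metric Filter

/-- Poincaré distance on the unit disk, normalized with density 1/(1-|z|^2). -/
noncomputable def rho (z w : ℂ) : ℝ :=
  (1 / 2) * Real.log ((1 + ‖(z - w) / (1 - (starRingEnd ℂ) w * z)‖) /
    (1 - ‖(z - w) / (1 - (starRingEnd ℂ) w * z)‖))

/-- The open unit disk Δ. -/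
def unitDisk : Set ℂ := Metric.ball (0 : ℂ) 1

/-- The hyperbolic disk of center `a` and ρ-radius `r` inside Δ. -/
def hBall (a : ℂ) (r : ℝ) : Set ℂ := {z ∈ unitDisk | rho a z < r}

/-- `X` is a ρ-Bloch subdomain of Δ: the ρ-radii of hyperbolic disks contained in `X`
are bounded. -/
def IsBloch (X : Set ℂ) : Prop :=
  ∃ R : ℝ, ∀ a ∈ unitDisk, ∀ r : ℝ, hBall a r ⊆ X → r ≤ R

/-- `f` is holomorphic on Δ with values in `X`. -/
def HolOn (f : ℂ → ℂ) (X : Set ℂ) : Prop :=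
  DifferentiableOn ℂ f unitDisk ∧ Set.MapsTo f unitDisk X

/-- The compositions `F_n = f 1 ∘ f 2 ∘ ⋯ ∘ f n` (with `F_0 = id`). -/
def comps (f : ℕ → ℂ → ℂ) : ℕ → ℂ → ℂ
  | 0 => id
  | n + 1 => comps f n ∘ f (n + 1)

/-- `X` is degenerate in Δ: every locally uniform subsequential limit of the
compositions of any sequence in Hol(Δ, X) is constant on Δ. -/
def Degenerate (X : Set ℂ) : Prop :=
  ∀ f : ℕ → ℂ → ℂ, (∀ n, 1 ≤ n → HolOn (f n) X) →
    ∀ φ : ℕ → ℕ, StrictMono φ → ∀ F : ℂ → ℂ,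
      TendstoLocallyUniformlyOn (fun k => comps f (φ k)) F atTop unitDisk →
      ∀ z ∈ unitDisk, ∀ w ∈ unitDisk, F z = F w

/-- The Poincaré distance of the hyperbolic domain `X` (as the distance pushed
forward from the disk by holomorphic maps; for domains covered by Δ this agrees
with the Poincaré metric of `X`). -/
noncomputable def rhoX (X : Set ℂ) (a b : ℂ) : ℝ :=
  sInf {r : ℝ | ∃ f : ℂ → ℂ, ∃ t ∈ unitDisk,
    HolOn f X ∧ f 0 = a ∧ f t = b ∧ r = rho 0 t}

/-!
For `z, w ∈ Δ` let `p(z, w) = |(z - w) / (1 - w̄ z)|` be the pseudo-hyperbolic distance.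
Pick's form of the Schwarz lemma says that holomorphic self-maps of Δ do not increase `p`.
Since `closure X` is compact in Δ, all `f_n` take values in a disk `|w| < s` with `s < 1`;
writing `f_n = s g_n` with `g_n : Δ → Δ`, and using that `w ↦ s w` contracts `p` by the factor
`k = 2s / (1 + s²) < 1`, every `f_n` is a `k`-contraction for `p`. Hence `F_n(Δ)` has
`p`-diameter, and so Euclidean diameter, at most a constant times `kⁿ`; these images are nested,
so they shrink to a single point `c`, which lies in `closure X` because `F_n(Δ) ⊆ f_1(Δ) ⊆ X`.
-/

open Set Topology ComplexConjugate

lemma mem_unitDisk {z : ℂ} : z ∈ unitDisk ↔ ‖z‖ < 1 := mem_ball_zero_iff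

noncomputable def diskMobius (a z : ℂ) : ℂ := (z - a) / (1 - conj a * z)

noncomputable def pseudoHyperbolicDist (z w : ℂ) : ℝ := ‖(z - w) / (1 - conj w * z)‖

lemma pseudoHyperbolicDist_eq_norm_diskMobius (z w : ℂ) :
    pseudoHyperbolicDist z w = ‖diskMobius w z‖ := rfl

lemma normSq_one_sub_conj_mul_sub_normSq_sub (a z : ℂ) :
    normSq (1 - conj a * z) - normSq (z - a) = (1 - normSq a) * (1 - normSq z) := by
  simp only [normSq_apply, sub_re, sub_im, mul_re, mul_im, conj_re, conj_im, one_re, one_im]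
  ring

lemma norm_conj_mul_lt_one {a z : ℂ} (ha : ‖a‖ < 1) (hz : ‖z‖ ≤ 1) : ‖conj a * z‖ < 1 := by
  rw [norm_mul, norm_conj]
  nlinarith [norm_nonneg a, norm_nonneg z]

lemma one_sub_conj_mul_ne_zero {a z : ℂ} (ha : ‖a‖ < 1) (hz : ‖z‖ ≤ 1) :
    1 - conj a * z ≠ 0 :=
  (isUnit_one_sub_of_norm_lt_one (norm_conj_mul_lt_one ha hz)).ne_zero

lemma norm_diskMobius_lt_one {a z : ℂ} (ha : ‖a‖ < 1) (hz : ‖z‖ < 1) :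
    ‖diskMobius a z‖ < 1 := by
  have hden := one_sub_conj_mul_ne_zero ha hz.le
  rw [diskMobius, norm_div, div_lt_one (norm_pos_iff.mpr hden)]
  have hsq : normSq (z - a) < normSq (1 - conj a * z) := by
    have := normSq_one_sub_conj_mul_sub_normSq_sub a z
    have ha' : normSq a < 1 := by rw [← Complex.sq_norm]; nlinarith [norm_nonneg a]
    have hz' : normSq z < 1 := by rw [← Complex.sq_norm]; nlinarith [norm_nonneg z]
    nlinarith
  rw [← sq_lt_sq₀ (norm_nonneg _) (norm_nonneg _), Complex.sq_norm, Complex.sq_norm]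
  exact hsq

lemma mapsTo_diskMobius {a : ℂ} (ha : ‖a‖ < 1) : MapsTo (diskMobius a) unitDisk unitDisk :=
  fun _ hz => mem_unitDisk.mpr (norm_diskMobius_lt_one ha (mem_unitDisk.mp hz))

lemma differentiableOn_diskMobius {a : ℂ} (ha : ‖a‖ < 1) :
    DifferentiableOn ℂ (diskMobius a) unitDisk :=
  ((differentiable_id.sub_const a).differentiableOn).div
    ((differentiable_id.const_mul (conj a)).const_sub 1).differentiableOn
    fun _ hz => one_sub_conj_mul_ne_zero ha (mem_unitDisk.mp hz).le

@[simp] lemma diskMobius_self (a : ℂ) : diskMobius a a = 0 := by simp [diskMobius]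

@[simp] lemma diskMobius_neg_zero (a : ℂ) : diskMobius (-a) 0 = a := by simp [diskMobius]

lemma diskMobius_neg_diskMobius {a z : ℂ} (ha : ‖a‖ < 1) (hz : ‖z‖ < 1) :
    diskMobius (-a) (diskMobius a z) = z := by
  have hz' := one_sub_conj_mul_ne_zero ha hz.le
  have ha' := one_sub_conj_mul_ne_zero ha ha.le
  have hnum : diskMobius a z + a = z * ((1 - conj a * a) / (1 - conj a * z)) := by
    rw [diskMobius, div_add' _ _ _ hz', mul_div_assoc']; congr 1; ring
  have hden : 1 + conj a * diskMobius a z = (1 - conj a * a) / (1 - conj a * z) := by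
    rw [diskMobius, mul_div_assoc', one_add_div hz']; congr 1; ring
  rw [diskMobius, map_neg, neg_mul, sub_neg_eq_add, sub_neg_eq_add, hnum, hden,
    mul_div_cancel_right₀ _ (div_ne_zero ha' hz')]

theorem pseudoHyperbolicDist_le_of_mapsTo_unitDisk {g : ℂ → ℂ}
    (hd : DifferentiableOn ℂ g unitDisk) (hm : MapsTo g unitDisk unitDisk)
    {z w : ℂ} (hz : ‖z‖ < 1) (hw : ‖w‖ < 1) :
    pseudoHyperbolicDist (g z) (g w) ≤ pseudoHyperbolicDist z w := by
  have hgw : ‖g w‖ < 1 := mem_unitDisk.mp (hm (mem_unitDisk.mpr hw))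
  set h := diskMobius (g w) ∘ g ∘ diskMobius (-w)
  have hw' : ‖-w‖ < 1 := by rwa [norm_neg]
  have hhd : DifferentiableOn ℂ h unitDisk :=
    (differentiableOn_diskMobius hgw).comp (hd.comp (differentiableOn_diskMobius hw')
      (mapsTo_diskMobius hw')) (hm.comp (mapsTo_diskMobius hw'))
  have hhm : MapsTo h unitDisk unitDisk :=
    (mapsTo_diskMobius hgw).comp (hm.comp (mapsTo_diskMobius hw'))
  have hh0 : h 0 = 0 := by simp [h]
  have := Complex.norm_le_norm_of_mapsTo_ball hhd (hhm.mono_right ball_subset_closedBall) hh0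
    (norm_diskMobius_lt_one hw hz)
  simpa [h, pseudoHyperbolicDist_eq_norm_diskMobius, diskMobius_neg_diskMobius hw hz] using this

lemma one_add_mul_norm_one_sub_le {t : ℝ} (ht0 : 0 ≤ t) (ht1 : t ≤ 1) {u : ℂ} (hu : ‖u‖ ≤ 1) :
    (1 + t) * ‖1 - u‖ ≤ 2 * ‖1 - t * u‖ := by
  have hre : -‖u‖ ≤ u.re := (abs_le.mp (abs_re_le_norm u)).1
  have hnorm : ‖u‖ ^ 2 = u.re ^ 2 + u.im ^ 2 := by rw [Complex.sq_norm, normSq_apply]; ring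
  have hlhs : ‖1 - u‖ ^ 2 = (1 - u.re) ^ 2 + u.im ^ 2 := by
    rw [Complex.sq_norm, normSq_apply]
    simp only [sub_re, sub_im, one_re, one_im]
    ring
  have hrhs : ‖1 - t * u‖ ^ 2 = (1 - t * u.re) ^ 2 + t ^ 2 * u.im ^ 2 := by
    rw [Complex.sq_norm, normSq_apply]
    simp only [sub_re, sub_im, one_re, one_im, mul_re, mul_im, ofReal_re, ofReal_im]
    ring
  -- modulo `hnorm`, `4 ‖1 - t u‖² - (1 + t)² ‖1 - u‖²` is the right-hand side of `key`
  have key : 0 ≤ (1 - t) *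
      ((1 - ‖u‖) * (3 + t + (1 + 3 * t) * ‖u‖) + 2 * (1 - t) * (u.re + ‖u‖)) := by
    have := norm_nonneg u
    apply mul_nonneg (by linarith)
    apply add_nonneg (mul_nonneg (by linarith) (by positivity))
    exact mul_nonneg (by linarith) (by linarith)
  rw [← sq_le_sq₀ (by positivity) (by positivity), mul_pow, mul_pow, hlhs, hrhs]
  linear_combination key - (1 - t) * (1 + 3 * t) * hnorm

lemma pseudoHyperbolicDist_ofReal_mul_le {s : ℝ} (hs0 : 0 ≤ s) (hs1 : s ≤ 1) {z w : ℂ}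
    (hz : ‖z‖ < 1) (hw : ‖w‖ < 1) :
    pseudoHyperbolicDist (s * z) (s * w) ≤ 2 * s / (1 + s ^ 2) * pseudoHyperbolicDist z w := by
  set u := conj w * z
  have hu : ‖u‖ < 1 := norm_conj_mul_lt_one hw hz.le
  have ht : ‖(s ^ 2 : ℝ) * u‖ < 1 := by
    rw [norm_mul, norm_real, Real.norm_eq_abs, abs_of_nonneg (by positivity)]
    nlinarith [norm_nonneg u, pow_le_one₀ (n := 2) hs0 hs1]
  have hD : 0 < ‖1 - u‖ := norm_pos_iff.mpr (isUnit_one_sub_of_norm_lt_one hu).ne_zero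
  have hDs : 0 < ‖1 - (s ^ 2 : ℝ) * u‖ :=
    norm_pos_iff.mpr (isUnit_one_sub_of_norm_lt_one ht).ne_zero
  have hcore := one_add_mul_norm_one_sub_le (sq_nonneg s) (pow_le_one₀ hs0 hs1) hu.le
  have hscale : pseudoHyperbolicDist (s * z) (s * w) = s * ‖z - w‖ / ‖1 - (s ^ 2 : ℝ) * u‖ := by
    rw [pseudoHyperbolicDist, norm_div, ← mul_sub, norm_mul, norm_real, Real.norm_eq_abs,
      abs_of_nonneg hs0]
    congr 2
    simp only [u, map_mul, conj_ofReal]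
    push_cast
    ring
  rw [hscale, pseudoHyperbolicDist, norm_div, div_le_iff₀ hDs,
    show 2 * s / (1 + s ^ 2) * (‖z - w‖ / ‖1 - u‖) * ‖1 - (s ^ 2 : ℝ) * u‖ =
      s * ‖z - w‖ * (2 * ‖1 - (s ^ 2 : ℝ) * u‖) / ((1 + s ^ 2) * ‖1 - u‖) by field_simp,
    le_div_iff₀ (by positivity)]
  exact mul_le_mul_of_nonneg_left hcore (by positivity)

theorem pseudoHyperbolicDist_le_of_mapsTo_ball {f : ℂ → ℂ} {s : ℝ} (hs0 : 0 < s) (hs1 : s ≤ 1)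
    (hd : DifferentiableOn ℂ f unitDisk) (hm : MapsTo f unitDisk (ball 0 s))
    {z w : ℂ} (hz : ‖z‖ < 1) (hw : ‖w‖ < 1) :
    pseudoHyperbolicDist (f z) (f w) ≤ 2 * s / (1 + s ^ 2) * pseudoHyperbolicDist z w := by
  set g : ℂ → ℂ := fun z => (s : ℂ)⁻¹ * f z
  have hs : (s : ℂ) ≠ 0 := ofReal_ne_zero.mpr hs0.ne'
  have hfg : ∀ z, f z = s * g z := fun z => (mul_inv_cancel_left₀ hs (f z)).symm
  have hgm : MapsTo g unitDisk unitDisk := fun z hz => by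
    have := mem_ball_zero_iff.mp (hm hz)
    rw [mem_unitDisk, norm_mul, norm_inv, norm_real, Real.norm_eq_abs, abs_of_pos hs0,
      inv_mul_lt_one₀ hs0]
    exact this
  have hgd : DifferentiableOn ℂ g unitDisk := hd.const_mul _
  have hgz := mem_unitDisk.mp (hgm (mem_unitDisk.mpr hz))
  have hgw := mem_unitDisk.mp (hgm (mem_unitDisk.mpr hw))
  rw [hfg z, hfg w]
  exact (pseudoHyperbolicDist_ofReal_mul_le hs0.le hs1 hgz hgw).trans
    (mul_le_mul_of_nonneg_left (pseudoHyperbolicDist_le_of_mapsTo_unitDisk hgd hgm hz hw)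
      (by positivity))

lemma pseudoHyperbolicDist_lt_one {z w : ℂ} (hz : ‖z‖ < 1) (hw : ‖w‖ < 1) :
    pseudoHyperbolicDist z w < 1 :=
  norm_diskMobius_lt_one hw hz

lemma norm_sub_le_two_mul_pseudoHyperbolicDist {z w : ℂ} (hz : ‖z‖ < 1) (hw : ‖w‖ < 1) :
    ‖z - w‖ ≤ 2 * pseudoHyperbolicDist z w := by
  have hD : 0 < ‖1 - conj w * z‖ := norm_pos_iff.mpr (one_sub_conj_mul_ne_zero hw hz.le)
  have hD2 : ‖1 - conj w * z‖ ≤ 2 := by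
    have := norm_conj_mul_lt_one hw hz.le
    linarith [norm_sub_le (1 : ℂ) (conj w * z), (norm_one : ‖(1 : ℂ)‖ = 1)]
  rw [pseudoHyperbolicDist, norm_div, ← mul_div_assoc, le_div_iff₀ hD]
  linarith [mul_le_mul_of_nonneg_left hD2 (norm_nonneg (z - w))]

lemma mapsTo_comps {f : ℕ → ℂ → ℂ} {s : Set ℂ} (hf : ∀ n, 1 ≤ n → MapsTo (f n) s s) (n : ℕ) :
    MapsTo (comps f n) s s := by
  induction n with
  | zero => exact mapsTo_id s
  | succ n ih => exact ih.comp (hf (n + 1) (Nat.le_add_left 1 n))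

lemma antitone_image_comps {f : ℕ → ℂ → ℂ} {s : Set ℂ} (hf : ∀ n, 1 ≤ n → MapsTo (f n) s s) :
    Antitone fun n => comps f n '' s := by
  refine antitone_nat_of_succ_le fun n => ?_
  rw [comps, image_comp]
  exact image_mono ((hf (n + 1) (Nat.le_add_left 1 n)).image_subset)

lemma comps_le_pow_mul {f : ℕ → ℂ → ℂ} {s : Set ℂ} {d : ℂ → ℂ → ℝ} {k : ℝ} (hk : 0 ≤ k)
    (hf : ∀ n, 1 ≤ n → MapsTo (f n) s s)
    (hd : ∀ n, 1 ≤ n → ∀ z ∈ s, ∀ w ∈ s, d (f n z) (f n w) ≤ k * d z w) (n : ℕ) :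
    ∀ z ∈ s, ∀ w ∈ s, d (comps f n z) (comps f n w) ≤ k ^ n * d z w := by
  induction n with
  | zero => simp [comps]
  | succ n ih =>
    intro z hz w hw
    have hn : 1 ≤ n + 1 := Nat.le_add_left 1 n
    calc d (comps f n (f (n + 1) z)) (comps f n (f (n + 1) w))
        ≤ k ^ n * d (f (n + 1) z) (f (n + 1) w) := ih _ (hf _ hn hz) _ (hf _ hn hw)
      _ ≤ k ^ n * (k * d z w) := mul_le_mul_of_nonneg_left (hd _ hn z hz w hw) (by positivity)
      _ = k ^ (n + 1) * d z w := by ring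

theorem exists_tendstoUniformlyOn_const_of_antitone {α E : Type*} [PseudoMetricSpace E]
    [CompleteSpace E] {F : ℕ → α → E} {s : Set α} {x₀ : α} (hx₀ : x₀ ∈ s)
    (hanti : Antitone fun n => F n '' s) {b : ℕ → ℝ} (hb : Tendsto b atTop (𝓝 0))
    (hdiam : ∀ n, ∀ x ∈ s, ∀ y ∈ s, dist (F n x) (F n y) ≤ b n) :
    ∃ c, (∀ n, c ∈ closure (F n '' s)) ∧ TendstoUniformlyOn F (fun _ => c) atTop s := by
  have hle : ∀ N n, N ≤ n → ∀ x ∈ s, ∀ y ∈ s, dist (F n x) (F N y) ≤ b N := by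
    intro N n hNn x hx y hy
    obtain ⟨x', hx', hxx'⟩ := hanti hNn (mem_image_of_mem (F n) hx)
    rw [← hxx']
    exact hdiam N x' hx' y hy
  have hcauchy : CauchySeq fun n => F n x₀ := Metric.cauchySeq_iff'.mpr fun ε hε =>
    (hb.eventually (gt_mem_nhds hε)).exists.imp fun N hN n hn =>
      (hle N n hn x₀ hx₀ x₀ hx₀).trans_lt hN
  obtain ⟨c, hc⟩ := cauchySeq_tendsto_of_complete hcauchy
  have hdist : ∀ n, ∀ x ∈ s, dist (F n x) c ≤ b n := fun n x hx =>
    le_of_tendsto (tendsto_const_nhds.dist hc) (eventually_atTop.mpr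
      ⟨n, fun m hm => by rw [dist_comm]; exact hle n m hm x₀ hx₀ x hx⟩)
  refine ⟨c, fun n => mem_closure_of_tendsto hc (eventually_atTop.mpr
    ⟨n, fun m hm => hanti hm (mem_image_of_mem _ hx₀)⟩), ?_⟩
  refine Metric.tendstoUniformlyOn_iff.mpr fun ε hε => ?_
  filter_upwards [hb.eventually (gt_mem_nhds hε)] with n hn x hx
  rw [dist_comm]
  exact (hdist n x hx).trans_lt hn

lemma dist_comps_le {f : ℕ → ℂ → ℂ} {s : ℝ} (hs0 : 0 < s) (hs1 : s ≤ 1)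
    (hd : ∀ n, 1 ≤ n → DifferentiableOn ℂ (f n) unitDisk)
    (hm : ∀ n, 1 ≤ n → MapsTo (f n) unitDisk (ball 0 s)) (n : ℕ) {z w : ℂ}
    (hz : z ∈ unitDisk) (hw : w ∈ unitDisk) :
    dist (comps f n z) (comps f n w) ≤ 2 * (2 * s / (1 + s ^ 2)) ^ n := by
  have hΔ : ∀ n, 1 ≤ n → MapsTo (f n) unitDisk unitDisk := fun n hn =>
    (hm n hn).mono_right (ball_subset_ball hs1)
  have hcontr : ∀ n, 1 ≤ n → ∀ z ∈ unitDisk, ∀ w ∈ unitDisk,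
      pseudoHyperbolicDist (f n z) (f n w) ≤ 2 * s / (1 + s ^ 2) * pseudoHyperbolicDist z w :=
    fun n hn z hz w hw =>
    pseudoHyperbolicDist_le_of_mapsTo_ball hs0 hs1 (hd n hn) (hm n hn) (mem_unitDisk.mp hz)
      (mem_unitDisk.mp hw)
  calc dist (comps f n z) (comps f n w)
      ≤ 2 * pseudoHyperbolicDist (comps f n z) (comps f n w) := by
        rw [dist_eq_norm]
        exact norm_sub_le_two_mul_pseudoHyperbolicDist (mem_unitDisk.mp (mapsTo_comps hΔ n hz))
          (mem_unitDisk.mp (mapsTo_comps hΔ n hw))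
    _ ≤ 2 * ((2 * s / (1 + s ^ 2)) ^ n * pseudoHyperbolicDist z w) := by
        gcongr
        exact comps_le_pow_mul (by positivity) hΔ hcontr n z hz w hw
    _ ≤ 2 * (2 * s / (1 + s ^ 2)) ^ n := by
        gcongr
        exact mul_le_of_le_one_right (by positivity)
          (pseudoHyperbolicDist_lt_one (mem_unitDisk.mp hz) (mem_unitDisk.mp hw)).le

theorem stmt19_general (X : Set ℂ) (hrc : closure X ⊆ unitDisk) (f : ℕ → ℂ → ℂ)
    (hf : ∀ n, 1 ≤ n → HolOn (f n) X) :
    ∃ c ∈ closure X, TendstoLocallyUniformlyOn (fun n => comps f n)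
      (fun _ => c) atTop unitDisk := by
  obtain ⟨s, hs1, hXs⟩ := exists_lt_subset_ball isClosed_closure hrc
  have hm : ∀ n, 1 ≤ n → MapsTo (f n) unitDisk (ball 0 s) := fun n hn =>
    (hf n hn).2.mono_right (subset_closure.trans hXs)
  have h0 : (0 : ℂ) ∈ unitDisk := mem_unitDisk.mpr (by simp)
  have hs0 : 0 < s := pos_of_mem_ball (hm 1 le_rfl h0)
  have hk : 2 * s / (1 + s ^ 2) < 1 := by
    rw [div_lt_one (by positivity)]
    nlinarith [mul_pos (sub_pos.mpr hs1) (sub_pos.mpr hs1)]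
  have hb : Tendsto (fun n => 2 * (2 * s / (1 + s ^ 2)) ^ n) atTop (𝓝 0) := by
    simpa using (tendsto_pow_atTop_nhds_zero_of_lt_one (by positivity) hk).const_mul 2
  obtain ⟨c, hc, hconv⟩ := exists_tendstoUniformlyOn_const_of_antitone h0
    (antitone_image_comps fun n hn => (hm n hn).mono_right (ball_subset_ball hs1.le)) hb
    fun n z hz w hw => dist_comps_le hs0 hs1.le (fun n hn => (hf n hn).1) hm n hz hw
  refine ⟨c, closure_mono ?_ (hc 1), hconv.tendstoLocallyUniformlyOn⟩
  rintro _ ⟨z, hz, rfl⟩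
  exact (hf 1 le_rfl).2 hz

/-- Gill–Lorentzen: if `X` is a relatively compact subdomain of Δ and `f_n : Δ → X`
are holomorphic, then `F_n = f_1 ∘ ⋯ ∘ f_n` converges locally uniformly on Δ to a
single constant `c ∈ closure X ⊆ Δ`. -/
theorem stmt19 (X : Set ℂ) (hXo : IsOpen X) (hXc : IsConnected X) (hXs : X ⊆ unitDisk)
    (hrc : closure X ⊆ unitDisk) (f : ℕ → ℂ → ℂ) (hf : ∀ n, 1 ≤ n → HolOn (f n) X) :
    ∃ c ∈ closure X, TendstoLocallyUniformlyOn (fun n => comps f n)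
      (fun _ => c) atTop unitDisk :=
  stmt19_general X hrc f hf
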